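/- Let a = (a_n) ∈ {0,2}^ℕ and let u = (u_n) ∈ Θ, where Θ ⊂ {0,2,−2}^ℕ consists of sequences whose first nonzero entry is not −2 and which do not end with 2(−2)^∞ or (−2)2^∞. Suppose that the pair (a,u) is not in Γ, where Γ is the set of pairs for which some common shift satisfies (σ^k a, σ^k u) = (02^∞, 02^∞) or (20^∞, 0(−2)^∞). If Σ_n a_n 3^{-n} + Σ_n u_n 3^{-n} ∈ C (the middle-third Cantor set), then a_n + u_n ∈ {0,2} for all n. -/

import Mathlib

/-- The middle-third Cantor set. -/
def cantorC : Set ℝ :=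
  {x | ∃ ε : ℕ → ℝ, (∀ n, ε n = 0 ∨ ε n = 2) ∧ x = ∑' n : ℕ, ε n / 3 ^ (n + 1)}

/-- Membership in Θ: values in {0,2,-2}, the first nonzero entry is not -2,
and the sequence does not end with 2(-2)^∞ or (-2)2^∞. -/
def inTheta (u : ℕ → ℝ) : Prop :=
  (∀ n, u n = 0 ∨ u n = 2 ∨ u n = -2) ∧
  (∀ n, (∀ k < n, u k = 0) → u n ≠ -2) ∧
  (¬ ∃ k, u k = 2 ∧ ∀ j > k, u j = -2) ∧
  (¬ ∃ k, u k = -2 ∧ ∀ j > k, u j = 2)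

private lemma summable_div_pow (c : ℕ → ℝ) (hc : ∀ n, |c n| ≤ 4) :
    Summable (fun n => c n / 3 ^ (n + 1)) := by
  apply Summable.of_norm_bounded (g := fun n => (4 : ℝ) * (1 / 3) ^ n)
  · exact (summable_geometric_of_lt_one (by norm_num) (by norm_num)).mul_left 4
  · intro n
    have h3 : (0 : ℝ) < 3 ^ (n + 1) := by positivity
    have h3' : (0 : ℝ) < 3 ^ n := by positivity
    rw [Real.norm_eq_abs, abs_div, abs_of_pos h3, div_le_iff₀ h3]
    calc |c n| ≤ 4 := hc n
      _ ≤ 4 * (1 / 3) ^ n * 3 ^ (n + 1) := by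
          rw [div_pow, one_pow, pow_succ]
          rw [show (4:ℝ) * (1 / 3 ^ n) * (3 ^ n * 3) = 12 * (3 ^ n / 3 ^ n) from by ring,
            div_self (ne_of_gt h3')]
          norm_num

private lemma all_zero_of_tsum_zero {f : ℕ → ℝ} (hs : Summable f) (hnn : ∀ i, 0 ≤ f i)
    (h0 : ∑' i, f i = 0) : ∀ i, f i = 0 := fun i =>
  le_antisymm (h0 ▸ hs.le_tsum i fun j _ => hnn j) (hnn i)

private lemma tsum_four_div (k : ℕ) : ∑' i : ℕ, (4 : ℝ) / 3 ^ (i + k + 2) = 2 / 3 ^ (k + 1) := by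
  have h : ∀ i : ℕ, (4 : ℝ) / 3 ^ (i + k + 2) = (4 / 3 ^ (k + 2)) * (1 / 3) ^ i := by
    intro i
    rw [show i + k + 2 = i + (k + 2) from by omega, pow_add, div_pow, one_pow]
    have h1 : ((3:ℝ)) ^ i ≠ 0 := by positivity
    have h2 : ((3:ℝ)) ^ (k+2) ≠ 0 := by positivity
    field_simp
  rw [tsum_congr h, tsum_mul_left, tsum_geometric_of_lt_one (by norm_num) (by norm_num)]
  have h2 : ((3:ℝ)) ^ (k+1) ≠ 0 := by positivity
  rw [show (3:ℝ) ^ (k + 2) = 3 ^ (k + 1) * 3 from by ring]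
  field_simp
  ring

private lemma summable_four_div (k : ℕ) : Summable (fun i : ℕ => (4 : ℝ) / 3 ^ (i + k + 2)) := by
  have h : ∀ i : ℕ, |(4 : ℝ)| ≤ 4 := by norm_num
  have := summable_div_pow (fun _ => (4 : ℝ)) h
  have h2 := (summable_nat_add_iff (f := fun n => (4:ℝ) / 3 ^ (n + 1)) (k + 1)).mpr this
  exact h2

theorem stmt_7 (a u : ℕ → ℝ)
    (ha : ∀ n, a n = 0 ∨ a n = 2)
    (hu : inTheta u)
    (hΓ : ¬ ∃ k : ℕ,
      (a k = 0 ∧ u k = 0 ∧ ∀ j > k, a j = 2 ∧ u j = 2) ∨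
      (a k = 2 ∧ u k = 0 ∧ ∀ j > k, a j = 0 ∧ u j = -2))
    (hsum : (∑' n : ℕ, a n / 3 ^ (n + 1)) + (∑' n : ℕ, u n / 3 ^ (n + 1)) ∈ cantorC) :
    ∀ n, a n + u n = 0 ∨ a n + u n = 2 := by
  obtain ⟨ε, hε, hεsum⟩ := hsum
  obtain ⟨hu1, hu2, hu3, hu4⟩ := hu
  set d : ℕ → ℝ := fun n => a n + u n - ε n with hd
  have hsa : Summable (fun n => a n / 3 ^ (n + 1)) :=
    summable_div_pow a (fun n => by rcases ha n with h | h <;> rw [h] <;> norm_num)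
  have hsu : Summable (fun n => u n / 3 ^ (n + 1)) :=
    summable_div_pow u (fun n => by rcases hu1 n with h | h | h <;> rw [h] <;> norm_num)
  have hsε : Summable (fun n => ε n / 3 ^ (n + 1)) :=
    summable_div_pow ε (fun n => by rcases hε n with h | h <;> rw [h] <;> norm_num)
  have hdabs : ∀ n, |d n| ≤ 4 := by
    intro n
    rcases ha n with h1 | h1 <;> rcases hu1 n with h2 | h2 | h2 <;> rcases hε n with h3 | h3 <;>
      simp [hd, h1, h2, h3] <;> norm_num
  set g : ℕ → ℝ := fun n => d n / 3 ^ (n + 1) with hg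
  have hsd : Summable g := summable_div_pow d hdabs
  have htsum0 : ∑' n, g n = 0 := by
    have heq : ∀ n, g n = a n / 3 ^ (n + 1) + u n / 3 ^ (n + 1) - ε n / 3 ^ (n + 1) := by
      intro n; simp only [hg, hd]; ring
    rw [tsum_congr heq, Summable.tsum_sub (hsa.add hsu) hsε, Summable.tsum_add hsa hsu, ← hεsum, sub_self]
  by_contra hcon
  push_neg at hcon
  obtain ⟨m, hm0, hm2⟩ := hcon
  have hex : ∃ n, d n ≠ 0 := by
    refine ⟨m, ?_⟩
    intro h
    rcases hε m with h3 | h3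
    · exact hm0 (by have : a m + u m - ε m = 0 := h; linarith [this, h3.symm ▸ this])
    · exact hm2 (by have : a m + u m - ε m = 0 := h; rw [h3] at this; linarith)
  set k := Nat.find hex with hkdef
  have hk : d k ≠ 0 := Nat.find_spec hex
  have hk0 : ∀ j < k, d j = 0 := fun j hj => not_not.mp (Nat.find_min hex hj)
  have hshift : Summable fun i => g (i + k) := (summable_nat_add_iff k).mpr hsd
  have hT0 : ∑' i, g (i + k) = 0 := by
    have := Summable.sum_add_tsum_nat_add (f := g) k hsd
    rw [htsum0] at this
    have hz : ∑ i ∈ Finset.range k, g i = 0 := by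
      apply Finset.sum_eq_zero
      intro j hj
      simp only [hg, hk0 j (Finset.mem_range.mp hj), zero_div]
    linarith [this, hz]
  set T : ℝ := ∑' i, g (i + (k + 1)) with hT
  have hsplit : g k + T = 0 := by
    have h1 := Summable.tsum_eq_zero_add hshift
    rw [hT0] at h1
    have h2 : ∑' i, g (i + 1 + k) = T := by
      apply tsum_congr
      intro i
      rw [show i + 1 + k = i + (k + 1) from by omega]
    rw [h2] at h1
    have : g (0 + k) = g k := by rw [Nat.zero_add]
    linarith [h1, this]
  have hshift1 : Summable fun i => g (i + (k + 1)) := (summable_nat_add_iff (k + 1)).mpr hsd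
  have hpow : (0 : ℝ) < 3 ^ (k + 1) := by positivity
  have hbound : |T| ≤ 2 / 3 ^ (k + 1) := by
    have h1 : ‖T‖ ≤ ∑' i, ‖g (i + (k + 1))‖ := norm_tsum_le_tsum_norm hshift1.norm
    have h2 : ∑' i, ‖g (i + (k + 1))‖ ≤ ∑' i : ℕ, (4 : ℝ) / 3 ^ (i + k + 2) := by
      apply Summable.tsum_le_tsum _ hshift1.norm (summable_four_div k)
      intro i
      have h3 : (0 : ℝ) < 3 ^ (i + k + 2) := by positivity
      rw [Real.norm_eq_abs, hg]
      simp only []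
      rw [abs_div, abs_of_pos (show (0:ℝ) < 3 ^ (i + (k+1) + 1) from by positivity)]
      rw [show i + (k + 1) + 1 = i + k + 2 from by omega]
      gcongr
      exact hdabs _
    rw [Real.norm_eq_abs] at h1
    calc |T| ≤ ∑' i, ‖g (i + (k + 1))‖ := h1
      _ ≤ ∑' i : ℕ, (4 : ℝ) / 3 ^ (i + k + 2) := h2
      _ = 2 / 3 ^ (k + 1) := tsum_four_div k
  have hdk : |d k| ≤ 2 := by
    have hTeq : T = -(d k / 3 ^ (k + 1)) := by
      have : g k = d k / 3 ^ (k + 1) := rfl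
      linarith [hsplit, this.symm ▸ hsplit]
    rw [hTeq, abs_neg, abs_div, abs_of_pos hpow, div_le_div_iff₀ hpow hpow] at hbound
    nlinarith [hbound, hpow]
  have hdval5 : ∀ n, d n = -4 ∨ d n = -2 ∨ d n = 0 ∨ d n = 2 ∨ d n = 4 := by
    intro n
    rcases ha n with h1 | h1 <;> rcases hu1 n with h2 | h2 | h2 <;> rcases hε n with h3 | h3 <;>
      simp only [hd, h1, h2, h3] <;> norm_num
  have hdvals : d k = 2 ∨ d k = -2 := by
    rcases hdval5 k with h | h | h | h | h
    · exfalso; rw [h] at hdk; norm_num at hdk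
    · exact Or.inr h
    · exact absurd h hk
    · exact Or.inl h
    · exfalso; rw [h] at hdk; norm_num at hdk
  have hTeq : T = -(d k / 3 ^ (k + 1)) := by
    have hgk : g k = d k / 3 ^ (k + 1) := rfl
    linarith [hsplit, hgk]
  have hgdef : ∀ i : ℕ, g (i + (k + 1)) = d (i + (k + 1)) / 3 ^ (i + k + 2) := by
    intro i
    simp only [hg]
    rw [show i + (k + 1) + 1 = i + k + 2 from by omega]
  rcases hdvals with hcase | hcase
  · -- d k = 2 : then d n = -4, i.e. a n = 0, u n = -2, for all n > k
    have hzero : ∀ i : ℕ, (d (i + (k + 1)) + 4) / 3 ^ (i + k + 2) = 0 := by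
      apply all_zero_of_tsum_zero
      · have := hshift1.add (summable_four_div k)
        refine this.congr fun i => ?_
        rw [hgdef i, ← add_div]
      · intro i
        apply div_nonneg _ (by positivity)
        have := abs_le.mp (hdabs (i + (k + 1)))
        linarith [this.1]
      · have h1 : ∑' i, ((d (i + (k + 1)) + 4) / 3 ^ (i + k + 2)) =
            (∑' i, g (i + (k + 1))) + ∑' i : ℕ, (4 : ℝ) / 3 ^ (i + k + 2) := by
          rw [← Summable.tsum_add hshift1 (summable_four_div k)]
          apply tsum_congr
          intro i
          rw [hgdef i, ← add_div]
        rw [h1, ← hT, tsum_four_div k, hTeq, hcase]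
        ring
    have hdn : ∀ n > k, d n = -4 := by
      intro n hn
      have h1 := hzero (n - (k + 1))
      rw [show n - (k + 1) + (k + 1) = n from by omega] at h1
      have h2 : (0 : ℝ) < 3 ^ (n - (k + 1) + k + 2) := by positivity
      have := div_eq_zero_iff.mp h1
      rcases this with h | h
      · linarith
      · exact absurd h (ne_of_gt h2)
    have key : ∀ n > k, a n = 0 ∧ u n = -2 := by
      intro n hn
      have h4 := hdn n hn
      rcases ha n with h1 | h1 <;> rcases hu1 n with h2 | h2 | h2 <;>
        rcases hε n with h3 | h3 <;> simp only [hd, h1, h2, h3] at h4 <;>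
        first
          | exact ⟨h1, h2⟩
          | (exfalso; norm_num at h4)
    rcases hu1 k with h2 | h2 | h2
    · have h1 : a k = 2 := by
        rcases ha k with h1 | h1
        · exfalso
          rcases hε k with h3 | h3 <;> simp only [hd, h1, h2, h3] at hcase <;> norm_num at hcase
        · exact h1
      exact hΓ ⟨k, Or.inr ⟨h1, h2, fun j hj => key j hj⟩⟩
    · exact hu3 ⟨k, h2, fun j hj => (key j hj).2⟩
    · exfalso
      rcases ha k with h1 | h1 <;> rcases hε k with h3 | h3 <;>
        simp only [hd, h1, h2, h3] at hcase <;> norm_num at hcase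
  · -- d k = -2 : then d n = 4, i.e. a n = 2, u n = 2, for all n > k
    have hzero : ∀ i : ℕ, (4 - d (i + (k + 1))) / 3 ^ (i + k + 2) = 0 := by
      apply all_zero_of_tsum_zero
      · have := (summable_four_div k).sub hshift1
        refine this.congr fun i => ?_
        rw [hgdef i, div_sub_div_same]
      · intro i
        apply div_nonneg _ (by positivity)
        have := abs_le.mp (hdabs (i + (k + 1)))
        linarith [this.2]
      · have h1 : ∑' i, ((4 - d (i + (k + 1))) / 3 ^ (i + k + 2)) =
            (∑' i : ℕ, (4 : ℝ) / 3 ^ (i + k + 2)) - ∑' i, g (i + (k + 1)) := by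
          rw [← Summable.tsum_sub (summable_four_div k) hshift1]
          apply tsum_congr
          intro i
          rw [hgdef i, div_sub_div_same]
        rw [h1, ← hT, tsum_four_div k, hTeq, hcase]
        ring
    have hdn : ∀ n > k, d n = 4 := by
      intro n hn
      have h1 := hzero (n - (k + 1))
      rw [show n - (k + 1) + (k + 1) = n from by omega] at h1
      have h2 : (0 : ℝ) < 3 ^ (n - (k + 1) + k + 2) := by positivity
      have := div_eq_zero_iff.mp h1
      rcases this with h | h
      · linarith
      · exact absurd h (ne_of_gt h2)
    have key : ∀ n > k, a n = 2 ∧ u n = 2 := by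
      intro n hn
      have h4 := hdn n hn
      rcases ha n with h1 | h1 <;> rcases hu1 n with h2 | h2 | h2 <;>
        rcases hε n with h3 | h3 <;> simp only [hd, h1, h2, h3] at h4 <;>
        first
          | exact ⟨h1, h2⟩
          | (exfalso; norm_num at h4)
    rcases hu1 k with h2 | h2 | h2
    · have h1 : a k = 0 := by
        rcases ha k with h1 | h1
        · exact h1
        · exfalso
          rcases hε k with h3 | h3 <;> simp only [hd, h1, h2, h3] at hcase <;> norm_num at hcase
      exact hΓ ⟨k, Or.inl ⟨h1, h2, fun j hj => key j hj⟩⟩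
    · exfalso
      rcases ha k with h1 | h1 <;> rcases hε k with h3 | h3 <;>
        simp only [hd, h1, h2, h3] at hcase <;> norm_num at hcase
    · exact hu4 ⟨k, h2, fun j hj => (key j hj).2⟩
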